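/- arXiv:2602.19120 — 4 statements merged into one kernel-verified Lean document; each statement's English description precedes it below -/
import Mathlib

section
/- Let θ be a real number with 0 < |θ| < π, let U : Matrix (Fin 2) (Fin 2) ℂ be the matrix [[cos(θ/2), -i·sin(θ/2)],[-i·sin(θ/2), cos(θ/2)]], and let P₀ be the projector |0⟩⟨0|. Then the conventional one-step block observable Uᴴ * P₀ * U and the causal one-step block observable P₀ are different matrices; more precisely, (Uᴴ * P₀ * U) 0 0 = (cos(θ/2))², which is strictly less than 1 = P₀ 0 0, so the conventional and causal HQMM probabilities of observing the effect |e₀⟩⟨e₀| at time 0 from the initial hidden state |0⟩⟨0| are different. -/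
open Matrix

/-- The projector `|0⟩⟨0|`. -/
def P0 : Matrix (Fin 2) (Fin 2) ℂ := !![1, 0; 0, 0]

/-- The hidden rotation `U = exp(-(iθ/2)σₓ)` written out entrywise. -/
noncomputable def Urot (θ : ℝ) : Matrix (Fin 2) (Fin 2) ℂ :=
  !![(Real.cos (θ / 2) : ℂ), -(Complex.I * (Real.sin (θ / 2) : ℂ));
     -(Complex.I * (Real.sin (θ / 2) : ℂ)), (Real.cos (θ / 2) : ℂ)]

/-- The conventional one-step block observable `Uᴴ P₀ U` differs from the causal one `P₀`:
its `(0,0)` entry is `cos²(θ/2) < 1 = P₀ 0 0`. -/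
theorem stmt_3 (θ : ℝ) (h0 : 0 < |θ|) (hπ : |θ| < Real.pi) :
    ((Urot θ)ᴴ * P0 * Urot θ) 0 0 = ((Real.cos (θ / 2) : ℂ)) ^ 2 ∧
      (Real.cos (θ / 2)) ^ 2 < 1 ∧
      P0 0 0 = 1 ∧
      (Urot θ)ᴴ * P0 * Urot θ ≠ P0 := by
  have hentry : ((Urot θ)ᴴ * P0 * Urot θ) 0 0 = ((Real.cos (θ / 2) : ℂ)) ^ 2 := by
    simp [Urot, P0, Matrix.mul_apply, Fin.sum_univ_two, conjTranspose_apply]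
    rw [← Complex.cos_conj]
    norm_num [Complex.conj_ofReal, map_ofNat]
    ring
  have hne : θ / 2 ≠ 0 := by
    intro h
    have : θ = 0 := by linarith
    simp [this] at h0
  have hsin : Real.sin (θ / 2) ≠ 0 := by
    rcases abs_lt.mp hπ with ⟨h1, h2⟩
    rcases lt_or_gt_of_ne hne with h | h
    · have : Real.sin (θ / 2) < 0 := by
        have := Real.sin_pos_of_pos_of_lt_pi (x := -(θ/2)) (by linarith) (by linarith)
        rw [Real.sin_neg] at this; linarith
      linarith
    · have : 0 < Real.sin (θ / 2) :=
        Real.sin_pos_of_pos_of_lt_pi h (by linarith)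
      linarith
  have hlt : (Real.cos (θ / 2)) ^ 2 < 1 := by
    have h1 := Real.sin_sq_add_cos_sq (θ / 2)
    have h2 : 0 < Real.sin (θ / 2) ^ 2 := pow_pos (abs_pos.mpr hsin) 2 |>.trans_le (by rw [sq_abs])
    nlinarith
  refine ⟨hentry, hlt, by simp [P0], ?_⟩
  intro h
  have h00 : ((Urot θ)ᴴ * P0 * Urot θ) 0 0 = P0 0 0 := by rw [h]
  rw [hentry] at h00
  have : ((Real.cos (θ / 2) : ℂ)) ^ 2 = 1 := by simpa [P0] using h00
  have hre : (Real.cos (θ / 2)) ^ 2 = 1 := by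
    exact_mod_cast this
  linarith
end

section
/- Let N, M be positive integers, let Π : Matrix (Fin N) (Fin N) ℝ and Q : Matrix (Fin N) (Fin M) ℝ have nonnegative entries, and define V_H : Matrix (Fin N × Fin N) (Fin N) ℂ by V_H (i,j) i' = if i' = i then (√(Π i j) : ℂ) else 0 and V_HO : Matrix (Fin N × Fin M) (Fin N) ℂ by V_HO (j,k) j' = if j' = j then (√(Q j k) : ℂ) else 0. Then for all a, a' : Matrix (Fin N) (Fin N) ℂ and b : Matrix (Fin M) (Fin M) ℂ, the conventional and causal block maps coincide: V_Hᴴ * ((V_HOᴴ * (a ⊗ₖ b) * V_HO) ⊗ₖ a') * V_H = V_HOᴴ * ((V_Hᴴ * (a ⊗ₖ a') * V_H) ⊗ₖ b) * V_HO. -/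
open Matrix Kronecker

lemma sandwich_entry {n m : ℕ} (c : Fin n × Fin m → ℂ)
    (X : Matrix (Fin n × Fin m) (Fin n × Fin m) ℂ) (x y : Fin n) :
    ((Matrix.of (fun p i' => if i' = p.1 then c p else 0))ᴴ * X *
      (Matrix.of fun (p : Fin n × Fin m) (i' : Fin n) => if i' = p.1 then c p else 0)) x y =
    ∑ j, ∑ j', (starRingEnd ℂ) (c (x, j)) * X (x, j) (y, j') * c (y, j') := by
  simp [Matrix.mul_apply, Fintype.sum_prod_type, ite_mul, mul_ite, Finset.mul_sum,
    Finset.sum_mul, apply_ite (starRingEnd ℂ), Finset.sum_ite_eq]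
  rw [Finset.sum_comm]
  simp [Finset.sum_ite_eq]
  rw [Finset.sum_comm]

lemma sum_swap_blocks {α β γ δ : Type*} [Fintype α] [Fintype β] [Fintype γ] [Fintype δ]
    (f : α → β → γ → δ → ℂ) :
    ∑ a, ∑ b, ∑ c, ∑ d, f a b c d = ∑ c, ∑ d, ∑ a, ∑ b, f a b c d := by
  calc ∑ a, ∑ b, ∑ c, ∑ d, f a b c d
      = ∑ p : α × β, ∑ q : γ × δ, f p.1 p.2 q.1 q.2 := by
        simp [Fintype.sum_prod_type]
    _ = ∑ q : γ × δ, ∑ p : α × β, f p.1 p.2 q.1 q.2 := Finset.sum_comm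
    _ = ∑ c, ∑ d, ∑ a, ∑ b, f a b c d := by
        simp [Fintype.sum_prod_type]

/-- For the entangled lifting of a classical HMM, the conventional
(emission-then-transition) and causal (transition-then-emission) block maps
coincide: `𝓕_{a,b}(a') = 𝓖_{a,b}(a')`. -/
theorem stmt_14 (N M : ℕ) (hN : 0 < N) (hM : 0 < M)
    (Pmat : Matrix (Fin N) (Fin N) ℝ) (Q : Matrix (Fin N) (Fin M) ℝ)
    (hPnn : ∀ i j, 0 ≤ Pmat i j) (hQnn : ∀ j k, 0 ≤ Q j k)
    (VH : Matrix (Fin N × Fin N) (Fin N) ℂ)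
    (hVH : VH = Matrix.of fun p i' =>
      if i' = p.1 then (Real.sqrt (Pmat p.1 p.2) : ℂ) else 0)
    (VHO : Matrix (Fin N × Fin M) (Fin N) ℂ)
    (hVHO : VHO = Matrix.of fun p j' =>
      if j' = p.1 then (Real.sqrt (Q p.1 p.2) : ℂ) else 0)
    (a a' : Matrix (Fin N) (Fin N) ℂ) (b : Matrix (Fin M) (Fin M) ℂ) :
    VHᴴ * ((VHOᴴ * (a ⊗ₖ b) * VHO) ⊗ₖ a') * VH =
      VHOᴴ * ((VHᴴ * (a ⊗ₖ a') * VH) ⊗ₖ b) * VHO := by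
  subst hVH hVHO
  ext x y
  rw [sandwich_entry (fun p => (Real.sqrt (Pmat p.1 p.2) : ℂ)),
      sandwich_entry (fun p => (Real.sqrt (Q p.1 p.2) : ℂ))]
  simp only [Matrix.kroneckerMap_apply,
    sandwich_entry (fun p => (Real.sqrt (Q p.1 p.2) : ℂ)),
    sandwich_entry (fun p => (Real.sqrt (Pmat p.1 p.2) : ℂ)),
    Finset.mul_sum, Finset.sum_mul]
  rw [sum_swap_blocks]
  refine Finset.sum_congr rfl fun j _ => Finset.sum_congr rfl fun j' _ =>
    Finset.sum_congr rfl fun k _ => Finset.sum_congr rfl fun k' _ => by ring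
end

section
/- Let N, M be positive integers, let Π : Matrix (Fin N) (Fin N) ℝ and Q : Matrix (Fin N) (Fin M) ℝ have nonnegative entries, and define V_H : Matrix (Fin N × Fin N) (Fin N) ℂ by V_H (i,j) i' = if i' = i then (√(Π i j) : ℂ) else 0 and V_HO : Matrix (Fin N × Fin M) (Fin N) ℂ by V_HO (j,k) j' = if j' = j then (√(Q j k) : ℂ) else 0. Then for all a, a' : Matrix (Fin N) (Fin N) ℂ and b : Matrix (Fin M) (Fin M) ℂ, the conventional block map F := V_Hᴴ * ((V_HOᴴ * (a ⊗ₖ b) * V_HO) ⊗ₖ a') * V_H satisfies, for all i, j : Fin N, F i j = a i j * (∑ k, ∑ k', (√(Q i k) : ℂ) * (√(Q j k') : ℂ) * b k k') * (∑ ℓ, ∑ m, (√(Π i ℓ) : ℂ) * (√(Π j m) : ℂ) * a' ℓ m). -/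
open Matrix Kronecker

lemma sandwich_apply {α β : Type*} [Fintype α] [Fintype β] [DecidableEq α]
    (c : α × β → ℂ) (G : Matrix (α × β) (α × β) ℂ) (i j : α) :
    ((Matrix.of fun p i' => if i' = p.1 then c p else 0)ᴴ * G *
      (Matrix.of fun p i' => if i' = p.1 then c p else 0)) i j
      = ∑ l, ∑ m, star (c (i, l)) * G (i, l) (j, m) * c (j, m) := by
  simp [Matrix.mul_apply, Matrix.conjTranspose_apply, Fintype.sum_prod_type,
    apply_ite (star : ℂ → ℂ), ite_mul, mul_ite, Finset.sum_ite_irrel,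
    Finset.sum_ite_eq, Finset.mul_sum, Finset.sum_mul]
  rw [Finset.sum_eq_single j]
  · simp only [if_pos rfl]
    exact Finset.sum_comm
  · intro x _ hx
    simp [(Ne.symm hx : j ≠ x)]
  · simp

/-- Entrywise formula for the conventional block map of the entangled lifting:
`F i j = a i j * (∑_{k,k'} √(Q i k) √(Q j k') b k k') * (∑_{ℓ,m} √(Π i ℓ) √(Π j m) a' ℓ m)`. -/
theorem stmt_15 (N M : ℕ) (hN : 0 < N) (hM : 0 < M)
    (Pmat : Matrix (Fin N) (Fin N) ℝ) (Q : Matrix (Fin N) (Fin M) ℝ)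
    (hPnn : ∀ i j, 0 ≤ Pmat i j) (hQnn : ∀ j k, 0 ≤ Q j k)
    (VH : Matrix (Fin N × Fin N) (Fin N) ℂ)
    (hVH : VH = Matrix.of fun p i' =>
      if i' = p.1 then (Real.sqrt (Pmat p.1 p.2) : ℂ) else 0)
    (VHO : Matrix (Fin N × Fin M) (Fin N) ℂ)
    (hVHO : VHO = Matrix.of fun p j' =>
      if j' = p.1 then (Real.sqrt (Q p.1 p.2) : ℂ) else 0)
    (a a' : Matrix (Fin N) (Fin N) ℂ) (b : Matrix (Fin M) (Fin M) ℂ) :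
    ∀ i j : Fin N,
      (VHᴴ * ((VHOᴴ * (a ⊗ₖ b) * VHO) ⊗ₖ a') * VH) i j =
        a i j *
          (∑ k, ∑ k', (Real.sqrt (Q i k) : ℂ) * (Real.sqrt (Q j k') : ℂ) * b k k') *
          (∑ l, ∑ m,
            (Real.sqrt (Pmat i l) : ℂ) * (Real.sqrt (Pmat j m) : ℂ) * a' l m) := by
  subst hVH hVHO
  intro i j
  rw [sandwich_apply (fun p => (Real.sqrt (Pmat p.1 p.2) : ℂ))]
  simp only [Matrix.kroneckerMap_apply,
    sandwich_apply (fun p => (Real.sqrt (Q p.1 p.2) : ℂ)),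
    Complex.star_def, Complex.conj_ofReal, Finset.mul_sum, Finset.sum_mul]
  refine Finset.sum_congr rfl fun l _ => Finset.sum_congr rfl fun m _ => ?_
  refine Finset.sum_congr rfl fun k _ => Finset.sum_congr rfl fun k' _ => ?_
  ring
end

section
/- Let N, M be positive integers, let Π : Matrix (Fin N) (Fin N) ℝ and Q : Matrix (Fin N) (Fin M) ℝ have nonnegative entries, and define V_H : Matrix (Fin N × Fin N) (Fin N) ℂ by V_H (i,j) i' = if i' = i then (√(Π i j) : ℂ) else 0 and V_HO : Matrix (Fin N × Fin M) (Fin N) ℂ by V_HO (j,k) j' = if j' = j then (√(Q j k) : ℂ) else 0. Let α, α' : Fin N → ℂ and β : Fin M → ℂ, and set a := diagonal α, a' := diagonal α', b := diagonal β. Then the conventional block map reduces to the classical forward-algorithm block: V_Hᴴ * ((V_HOᴴ * (a ⊗ₖ b) * V_HO) ⊗ₖ a') * V_H = Matrix.diagonal (fun i => α i * (∑ k, (Q i k : ℂ) * β k) * (∑ j, (Π i j : ℂ) * α' j)). -/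
open Matrix Kronecker

lemma sandwich {N K : ℕ} (w : Matrix (Fin N) (Fin K) ℝ) (hw : ∀ i k, 0 ≤ w i k)
    (f : Fin N × Fin K → ℂ) :
    (Matrix.of fun (p : Fin N × Fin K) (i' : Fin N) =>
        if i' = p.1 then (Real.sqrt (w p.1 p.2) : ℂ) else 0)ᴴ *
      Matrix.diagonal f *
      (Matrix.of fun (p : Fin N × Fin K) (i' : Fin N) =>
        if i' = p.1 then (Real.sqrt (w p.1 p.2) : ℂ) else 0) =
    Matrix.diagonal (fun i => ∑ k, (w i k : ℂ) * f (i, k)) := by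
  ext i i'
  simp only [mul_apply, conjTranspose_apply, of_apply, diagonal_apply,
    Fintype.sum_prod_type, Prod.mk.injEq, ite_and, apply_ite star, star_zero,
    ite_mul, zero_mul, mul_ite, mul_zero, Finset.sum_ite_eq,
    Finset.sum_ite_eq', Finset.mem_univ, if_true]
  by_cases h : i = i'
  · subst h
    rw [if_pos rfl, Finset.sum_eq_single i]
    · refine Finset.sum_congr rfl fun k _ => ?_
      rw [if_pos rfl, if_pos rfl]
      have hs : (Real.sqrt (w i k) : ℂ) * (Real.sqrt (w i k) : ℂ) = (w i k : ℂ) := by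
        rw [← Complex.ofReal_mul, Real.mul_self_sqrt (hw i k)]
      rw [Complex.star_def, Complex.conj_ofReal]
      linear_combination f (i, k) * hs
    · intro b _ hb
      apply Finset.sum_eq_zero; intro k _
      rw [if_neg (fun hh => hb hh.symm)]
    · simp
  · simp only [if_neg h, if_neg (Ne.symm h)]
    apply Finset.sum_eq_zero; intro x _
    apply Finset.sum_eq_zero; intro k _
    split_ifs with h1 h2 <;> simp_all

/-- For diagonal observables the conventional block map of the entangled lifting
reduces to the classical forward-algorithm block. -/
theorem stmt_16 (N M : ℕ) (hN : 0 < N) (hM : 0 < M)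
    (Pmat : Matrix (Fin N) (Fin N) ℝ) (Q : Matrix (Fin N) (Fin M) ℝ)
    (hPnn : ∀ i j, 0 ≤ Pmat i j) (hQnn : ∀ j k, 0 ≤ Q j k)
    (VH : Matrix (Fin N × Fin N) (Fin N) ℂ)
    (hVH : VH = Matrix.of fun p i' =>
      if i' = p.1 then (Real.sqrt (Pmat p.1 p.2) : ℂ) else 0)
    (VHO : Matrix (Fin N × Fin M) (Fin N) ℂ)
    (hVHO : VHO = Matrix.of fun p j' =>
      if j' = p.1 then (Real.sqrt (Q p.1 p.2) : ℂ) else 0)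
    (α α' : Fin N → ℂ) (β : Fin M → ℂ) :
    VHᴴ * ((VHOᴴ * (Matrix.diagonal α ⊗ₖ Matrix.diagonal β) * VHO) ⊗ₖ
        Matrix.diagonal α') * VH =
      Matrix.diagonal (fun i =>
        α i * (∑ k, (Q i k : ℂ) * β k) * (∑ j, (Pmat i j : ℂ) * α' j)) := by
  subst hVH hVHO
  rw [Matrix.diagonal_kronecker_diagonal, sandwich Q hQnn,
    Matrix.diagonal_kronecker_diagonal, sandwich Pmat hPnn]
  refine congrArg Matrix.diagonal (funext fun i => ?_)
  simp only [Finset.sum_mul, Finset.mul_sum]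
  exact Finset.sum_congr rfl fun j _ => Finset.sum_congr rfl fun k _ => by ring
end
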